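/- Let A be a nonnegative tensor of order m and dimension n such that a_{i i₂ ⋯ i_m} = 0 whenever i₂,…,i_m are not all equal, and suppose M(A) is a primitive matrix. Then A is a primitive tensor and γ(A) = γ(M(A)), where γ denotes the primitive degree (smallest r with M(A^r) > 0, resp. smallest r with (M(A))^r > 0). -/

import Mathlib

open Finset

/- An order-`m` dimension-`n` nonnegative tensor is encoded as
`A : Fin n → (Fin (m-1) → Fin n) → ℝ`, with `A i t = a_{i t₁ ⋯ t_{m-1}}`. -/

/-- The majorization matrix `M(A)_{ij} = a_{ij⋯j}`. -/
def maj (n m : ℕ) (A : Fin n → (Fin (m-1) → Fin n) → ℝ) :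
    Matrix (Fin n) (Fin n) ℝ :=
  fun i j => A i (fun _ => j)

/-- The majorization matrices of the Shao-product powers of `A`:
`majPow n m A k = M(A^k)`, via the recursion
`M(A^{k+1})_{uj} = Σ_{j₂,…,j_m} a_{u j₂ ⋯ j_m} M(A^k)_{j₂ j} ⋯ M(A^k)_{j_m j}`
(with `M(A^0)` the identity, so that `majPow n m A 1 = maj n m A`). -/
def majPow (n m : ℕ) (A : Fin n → (Fin (m-1) → Fin n) → ℝ) :
    ℕ → Matrix (Fin n) (Fin n) ℝ
  | 0 => 1
  | k + 1 => fun u j =>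
      ∑ t : Fin (m-1) → Fin n, A u t * ∏ i, majPow n m A k (t i) j

/-- `A` is primitive: `M(A^r) > 0` entrywise for some positive `r`. -/
def Primitive (n m : ℕ) (A : Fin n → (Fin (m-1) → Fin n) → ℝ) : Prop :=
  ∃ r, 0 < r ∧ ∀ u j, 0 < majPow n m A r u j

/-! The support condition collapses Shao's recursion to
`M(A^{k+1})_{uj} = ∑_c M(A)_{uc} (M(A^k)_{cj})^{m-1}`. For nonnegative entries the power `m - 1 ≥ 1`
does not change which entries are positive, so by induction `M(A^k)` and `M(A)^k` have the same
positive entries for every `k`; the two sets of exponents defining `γ(A)` and `γ(M(A))` coincide. -/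

section

variable {R : Type*} [Semiring R] [LinearOrder R] [IsStrictOrderedRing R]

lemma sum_mul_pos_iff {ι : Type*} [Fintype ι] {a b : ι → R}
    (ha : ∀ c, 0 ≤ a c) (hb : ∀ c, 0 ≤ b c) :
    0 < ∑ c, a c * b c ↔ ∃ c, 0 < a c ∧ 0 < b c := by
  simp only [Finset.sum_pos_iff_of_nonneg fun c _ => mul_nonneg (ha c) (hb c), mem_univ, true_and]
  refine exists_congr fun c => ⟨fun h => ?_, fun h => mul_pos h.1 h.2⟩
  exact ⟨(ha c).lt_of_ne (by rintro h0; simp [← h0] at h),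
    (hb c).lt_of_ne (by rintro h0; simp [← h0] at h)⟩

lemma pow_pos_iff_of_nonneg {a : R} {p : ℕ} (ha : 0 ≤ a) (hp : p ≠ 0) : 0 < a ^ p ↔ 0 < a := by
  refine ⟨fun h => ha.lt_of_ne ?_, fun h => pow_pos h p⟩
  rintro rfl
  simp [zero_pow hp] at h

end

lemma Fintype.sum_eq_sum_const_of_eq_zero {ι α M : Type*} [Fintype ι] [DecidableEq ι] [Nonempty ι]
    [Fintype α] [AddCommMonoid M] (f : (ι → α) → M)
    (hf : ∀ t, (¬ ∀ k k', t k = t k') → f t = 0) :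
    ∑ t, f t = ∑ c, f (fun _ => c) := by
  classical
  obtain ⟨i⟩ := ‹Nonempty ι›
  rw [← Finset.sum_image (f := f) (g := fun c _ => c) fun a _ b _ h => congrFun h i]
  refine (Finset.sum_subset (subset_univ _) fun t _ ht => hf t fun hconst => ht ?_).symm
  exact mem_image.mpr ⟨t i, mem_univ _, funext fun k => hconst i k⟩

section

variable {n m : ℕ} {A : Fin n → (Fin (m-1) → Fin n) → ℝ}

lemma majPow_nonneg (hA : ∀ u t, 0 ≤ A u t) (k : ℕ) (u j : Fin n) : 0 ≤ majPow n m A k u j := by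
  induction k generalizing u with
  | zero => by_cases h : u = j <;> simp [majPow, Matrix.one_apply, h]
  | succ k ih => exact sum_nonneg fun t _ => mul_nonneg (hA u t) (prod_nonneg fun i _ => ih _)

lemma majPow_succ_of_diag (hm : 2 ≤ m)
    (hdiag : ∀ (i : Fin n) (t : Fin (m-1) → Fin n),
      (¬ ∀ k k' : Fin (m-1), t k = t k') → A i t = 0) (k : ℕ) (u j : Fin n) :
    majPow n m A (k + 1) u j = ∑ c, maj n m A u c * majPow n m A k c j ^ (m - 1) := by
  have : Nonempty (Fin (m-1)) := ⟨⟨0, by omega⟩⟩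
  simp only [majPow]
  rw [Fintype.sum_eq_sum_const_of_eq_zero _ fun t ht => by rw [hdiag u t ht, zero_mul]]
  simp only [prod_const, card_univ, Fintype.card_fin, maj]

lemma majPow_pos_iff_maj_pow_pos (hm : 2 ≤ m) (hA : ∀ u t, 0 ≤ A u t)
    (hdiag : ∀ (i : Fin n) (t : Fin (m-1) → Fin n),
      (¬ ∀ k k' : Fin (m-1), t k = t k') → A i t = 0) (k : ℕ) (u j : Fin n) :
    0 < majPow n m A k u j ↔ 0 < (maj n m A ^ k) u j := by
  have hmaj : ∀ i j, 0 ≤ maj n m A i j := fun i j => hA _ _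
  induction k generalizing u with
  | zero => rfl
  | succ k ih =>
    rw [majPow_succ_of_diag hm hdiag, pow_succ', Matrix.mul_apply,
      sum_mul_pos_iff (hmaj u) fun c => pow_nonneg (majPow_nonneg hA k c j) _,
      sum_mul_pos_iff (hmaj u) fun c => Matrix.pow_apply_nonneg hmaj k c j]
    exact exists_congr fun c => and_congr_right' <|
      (pow_pos_iff_of_nonneg (majPow_nonneg hA k c j) (by omega)).trans (ih c)

end

/-- for a tensor supported on equal trailing indices with
primitive majorization matrix, `A` is primitive and `γ(A) = γ(M(A))`. -/
theorem stmt_15 (n m : ℕ) (hm : 2 ≤ m)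
    (A : Fin n → (Fin (m-1) → Fin n) → ℝ) (hA : ∀ u t, 0 ≤ A u t)
    (hdiag : ∀ (i : Fin n) (t : Fin (m-1) → Fin n),
      (¬ ∀ k k' : Fin (m-1), t k = t k') → A i t = 0)
    (hMprim : ∃ r, 0 < r ∧ ∀ i j : Fin n, 0 < ((maj n m A) ^ r) i j) :
    Primitive n m A ∧
      sInf {r : ℕ | 0 < r ∧ ∀ u j : Fin n, 0 < majPow n m A r u j}
        = sInf {r : ℕ | 0 < r ∧ ∀ i j : Fin n, 0 < ((maj n m A) ^ r) i j} := by
  have hpos := majPow_pos_iff_maj_pow_pos hm hA hdiag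
  obtain ⟨r, hr, hMr⟩ := hMprim
  refine ⟨⟨r, hr, fun u j => (hpos r u j).mpr (hMr u j)⟩, ?_⟩
  simp only [hpos]
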